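/- Let G = (V,E) be an infinite (g,o)-growing graph with g ≥ 1. Then for every finite nonempty subset C ⊆ V one has |∂↓C| − |∂↗C| ≥ g|C|, where ∂↓C is the set of edges of the edge boundary of C whose endpoint in C lies in some level L_j and whose other endpoint lies in L_{j+1}, and ∂↗C is the set of remaining edges of the edge boundary of C. -/

import Mathlib

/- Common framework: Ising model with boundary conditions on (finite pieces of)
   locally finite graphs, heat-bath Glauber dynamics quantities. -/

open Finset
open scoped Classical

noncomputable section

namespace IsingGlauber

/-- The real spin value of a Boolean spin: `true ↦ +1`, `false ↦ -1`. -/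
def spin (b : Bool) : ℝ := if b then 1 else -1

variable {V : Type*}

/-- Neighbourhood finset of a vertex, from an explicit local finiteness witness. -/
def nbr (G : SimpleGraph V) (hlf : G.LocallyFinite) (x : V) : Finset V :=
  @SimpleGraph.neighborFinset V G x (hlf x)

/-- `G` is `(g,o)`-growing: every vertex `x` (say at distance `r` from `o`) has at
    least `g` more neighbours in level `r+1` than in the ball of radius `r`. -/
def IsGrowing (G : SimpleGraph V) (hlf : G.LocallyFinite) (g : ℕ) (o : V) : Prop :=
  ∀ x : V,
    ((nbr G hlf x).filter fun z => G.dist o z ≤ G.dist o x).card + g ≤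
      ((nbr G hlf x).filter fun z => G.dist o z = G.dist o x + 1).card

variable [DecidableEq V]

/-- External vertex boundary of a finite vertex set. -/
def vbd (G : SimpleGraph V) (hlf : G.LocallyFinite) (A : Finset V) : Finset V :=
  A.biUnion (fun a => nbr G hlf a) \ A

/-- Closure `A ∪ ∂_V A` of a finite vertex set. -/
def cl (G : SimpleGraph V) (hlf : G.LocallyFinite) (A : Finset V) : Finset V :=
  A ∪ vbd G hlf A

/-- Ising Hamiltonian (zero field) with boundary: `Σ_{(x,y) ∈ E(A ∪ ∂_V A)} σ_x σ_y`,
    the sum over edges with both endpoints in `A ∪ ∂_V A` (each edge counted once). -/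
def energyB (G : SimpleGraph V) (hlf : G.LocallyFinite) (A : Finset V) (σ : V → Bool) : ℝ :=
  (1 / 2) * ∑ x ∈ cl G hlf A, ∑ y ∈ (cl G hlf A).filter (fun y => G.Adj x y),
    spin (σ x) * spin (σ y)

/-- Free-boundary Ising Hamiltonian: `Σ_{(x,y) ∈ E(A)} σ_x σ_y`,
    the sum over edges with both endpoints in `A` (each edge counted once). -/
def energyF (G : SimpleGraph V) (A : Finset V) (σ : V → Bool) : ℝ :=
  (1 / 2) * ∑ x ∈ A, ∑ y ∈ A.filter (fun y => G.Adj x y), spin (σ x) * spin (σ y)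

/-- The configuration equal to `p` on `A` and to `η` off `A`. -/
def patch (A : Finset V) (η : V → Bool) (p : ∀ a ∈ A, Bool) : V → Bool :=
  fun v => if h : v ∈ A then p v h else η v

/-- Unnormalised Gibbs sum over configurations agreeing with `η` off `A`,
    with energy functional `E` (which should already include the factor `β`). -/
def wsum (E : (V → Bool) → ℝ) (A : Finset V) (η : V → Bool) (f : (V → Bool) → ℝ) : ℝ :=
  ∑ p ∈ A.pi (fun _ => (Finset.univ : Finset Bool)),
    Real.exp (E (patch A η p)) * f (patch A η p)

/-- Gibbs expectation of `f` for the measure on region `A` with boundary condition `η`. -/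
def gExp (E : (V → Bool) → ℝ) (A : Finset V) (η : V → Bool) (f : (V → Bool) → ℝ) : ℝ :=
  wsum E A η f / wsum E A η (fun _ => 1)

/-- Gibbs probability of an event. -/
def gProb (E : (V → Bool) → ℝ) (A : Finset V) (η : V → Bool) (P : (V → Bool) → Prop) : ℝ :=
  gExp E A η (fun σ => if P σ then 1 else 0)

/-- Gibbs variance of `f`. -/
def gVar (E : (V → Bool) → ℝ) (A : Finset V) (η : V → Bool) (f : (V → Bool) → ℝ) : ℝ :=
  gExp E A η (fun σ => f σ ^ 2) - gExp E A η f ^ 2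

/-- Dirichlet form of the heat-bath Glauber dynamics:
    `D(f) = Σ_{x ∈ A} μ(Var_x(f))`, where `Var_x(f)(σ)` is the variance of `f`
    under the one-site conditional Gibbs measure at `x` given `σ` elsewhere. -/
def dirich (E : (V → Bool) → ℝ) (A : Finset V) (η : V → Bool) (f : (V → Bool) → ℝ) : ℝ :=
  ∑ x ∈ A, gExp E A η (fun σ => gVar E {x} σ f)

/-- Spectral gap `c_gap(μ) = inf { D(f)/Var(f) : Var(f) ≠ 0 }`. -/
def cgap (E : (V → Bool) → ℝ) (A : Finset V) (η : V → Bool) : ℝ :=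
  sInf {r : ℝ | ∃ f : (V → Bool) → ℝ, gVar E A η f ≠ 0 ∧ r = dirich E A η f / gVar E A η f}

/-- The edge boundary of `C`, encoded as ordered pairs `(u,v)` with `u ∈ C`,
    `v ∉ C` and `u ~ v`; these pairs are in bijection with the boundary edges. -/
def obd (G : SimpleGraph V) (hlf : G.LocallyFinite) (C : Finset V) : Finset (V × V) :=
  (C ×ˢ C.biUnion (fun c => nbr G hlf c)).filter (fun p => G.Adj p.1 p.2 ∧ p.2 ∉ C)

end IsingGlauber

open IsingGlauber

/- Count the ordered adjacent pairs `(u, v)` with `u ∈ C`. Summing the growth condition over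
`u ∈ C` shows that the pairs stepping one level away from `o` outnumber the others by at least
`g|C|`. Among pairs with both ends in `C`, reversal injects the outward steps into the other
pairs, so the surplus is carried by the pairs with `v ∉ C`, i.e. by the edge boundary. -/

namespace IsingGlauber

variable {V : Type*} {G : SimpleGraph V} {hlf : G.LocallyFinite}

lemma mem_nbr {x v : V} : v ∈ nbr G hlf x ↔ G.Adj x v := by
  simp [nbr]

lemma dist_le_dist_add_one_of_adj (o : V) {x v : V} (h : G.Adj x v) :
    G.dist o v ≤ G.dist o x + 1 := by
  simpa [SimpleGraph.dist_eq_one_iff_adj.mpr h] using h.reachable.dist_triangle_right o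

lemma IsGrowing.card_filter_not_add_le {g : ℕ} {o : V} (hgrow : IsGrowing G hlf g o) (x : V) :
    ((nbr G hlf x).filter fun z => ¬ G.dist o z = G.dist o x + 1).card + g ≤
      ((nbr G hlf x).filter fun z => G.dist o z = G.dist o x + 1).card := by
  have hball : ((nbr G hlf x).filter fun z => G.dist o z ≤ G.dist o x) =
      (nbr G hlf x).filter fun z => ¬ G.dist o z = G.dist o x + 1 := by
    refine Finset.filter_congr fun z hz => ?_
    have := dist_le_dist_add_one_of_adj o (mem_nbr.mp hz)
    omega
  simpa [hball] using hgrow x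

variable [DecidableEq V]

def adjPairs (G : SimpleGraph V) (hlf : G.LocallyFinite) (C : Finset V) : Finset (V × V) :=
  (C ×ˢ C.biUnion (nbr G hlf)).filter fun p => G.Adj p.1 p.2

lemma mem_adjPairs {C : Finset V} {p : V × V} :
    p ∈ adjPairs G hlf C ↔ p.1 ∈ C ∧ G.Adj p.1 p.2 := by
  simp only [adjPairs, Finset.mem_filter, Finset.mem_product, Finset.mem_biUnion, mem_nbr]
  exact ⟨fun h => ⟨h.1.1, h.2⟩, fun h => ⟨⟨h.1, p.1, h.1, h.2⟩, h.2⟩⟩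

variable (G hlf)

lemma obd_eq_filter_adjPairs (C : Finset V) :
    obd G hlf C = (adjPairs G hlf C).filter fun p => p.2 ∉ C := by
  simp only [obd, adjPairs, Finset.filter_filter]

lemma card_filter_adjPairs (C : Finset V) (q : V × V → Prop) [DecidablePred q] :
    ((adjPairs G hlf C).filter q).card =
      ∑ u ∈ C, ((nbr G hlf u).filter fun v => q (u, v)).card := by
  rw [← Finset.card_sigma]
  refine Finset.card_nbij' (fun p => ⟨p.1, p.2⟩) (fun p => (p.1, p.2)) ?_ ?_ ?_ ?_
  · intro p hp
    simp only [Finset.mem_coe, Finset.mem_filter, mem_adjPairs] at hp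
    simpa [mem_nbr] using ⟨hp.1.1, hp.1.2, hp.2⟩
  · intro p hp
    simp only [Finset.mem_coe, Finset.mem_sigma, Finset.mem_filter, mem_nbr] at hp
    simpa [mem_adjPairs] using ⟨⟨hp.1, hp.2.1⟩, hp.2.2⟩
  · exact fun _ _ => rfl
  · exact fun _ _ => rfl

lemma card_filter_adjPairs_eq_add (C : Finset V) (q : V × V → Prop) [DecidablePred q] :
    ((adjPairs G hlf C).filter q).card =
      ((adjPairs G hlf C).filter fun p => p.2 ∈ C ∧ q p).card +
        ((obd G hlf C).filter q).card := by
  rw [← Finset.card_filter_add_card_filter_not (p := fun p => p.2 ∈ C),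
    obd_eq_filter_adjPairs G]
  simp only [Finset.filter_filter, and_comm]

lemma card_filter_adjPairs_le_of_asymm (C : Finset V) (r : V → V → Prop) [DecidableRel r]
    (hr : ∀ u v, r u v → ¬ r v u) :
    ((adjPairs G hlf C).filter fun p => p.2 ∈ C ∧ r p.1 p.2).card ≤
      ((adjPairs G hlf C).filter fun p => p.2 ∈ C ∧ ¬ r p.1 p.2).card := by
  refine Finset.card_le_card_of_injOn Prod.swap (fun p hp => ?_) Prod.swap_injective.injOn
  simp only [Finset.mem_coe, Finset.mem_filter, mem_adjPairs, Prod.fst_swap,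
    Prod.snd_swap] at hp ⊢
  exact ⟨⟨hp.2.1, hp.1.2.symm⟩, hp.1.1, hr _ _ hp.2.2⟩

end IsingGlauber

theorem statement7_general {V : Type*} [DecidableEq V]
    (G : SimpleGraph V) (hlf : G.LocallyFinite)
    (g : ℕ) (o : V)
    (hgrow : IsGrowing G hlf g o)
    (C : Finset V) :
    (g : ℤ) * (C.card : ℤ) ≤
      (((obd G hlf C).filter (fun p => G.dist o p.2 = G.dist o p.1 + 1)).card : ℤ) -
        (((obd G hlf C).filter (fun p => ¬ G.dist o p.2 = G.dist o p.1 + 1)).card : ℤ) := by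
  have hsurplus :
      ((adjPairs G hlf C).filter fun p => ¬ G.dist o p.2 = G.dist o p.1 + 1).card + C.card * g ≤
        ((adjPairs G hlf C).filter fun p => G.dist o p.2 = G.dist o p.1 + 1).card := by
    rw [card_filter_adjPairs, card_filter_adjPairs, ← smul_eq_mul, ← Finset.sum_const,
      ← Finset.sum_add_distrib]
    exact Finset.sum_le_sum fun u _ => hgrow.card_filter_not_add_le u
  have hinner := card_filter_adjPairs_le_of_asymm G hlf C
    (fun u v => G.dist o v = G.dist o u + 1) (fun u v h h' => by omega)
  have hdown := card_filter_adjPairs_eq_add G hlf C fun p => G.dist o p.2 = G.dist o p.1 + 1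
  have hnot := card_filter_adjPairs_eq_add G hlf C fun p => ¬ G.dist o p.2 = G.dist o p.1 + 1
  lia

/-- in an infinite `(g,o)`-growing graph, for every finite nonempty
`C ⊆ V` one has `|∂↓C| - |∂↗C| ≥ g|C|`, where `∂↓C` are the boundary edges of `C`
going from a level `L_j` (inside `C`) down to level `L_{j+1}`, and `∂↗C` the
remaining boundary edges. -/
theorem statement7 {V : Type*} [DecidableEq V] [Infinite V]
    (G : SimpleGraph V) (hlf : G.LocallyFinite) (hconn : G.Connected)
    (g : ℕ) (hg : 1 ≤ g) (o : V)
    (hgrow : IsGrowing G hlf g o)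
    (C : Finset V) (hC : C.Nonempty) :
    (g : ℤ) * (C.card : ℤ) ≤
      (((obd G hlf C).filter (fun p => G.dist o p.2 = G.dist o p.1 + 1)).card : ℤ) -
        (((obd G hlf C).filter (fun p => ¬ G.dist o p.2 = G.dist o p.1 + 1)).card : ℤ) :=
  statement7_general G hlf g o hgrow C
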